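/- Attainment of the nuclear-norm factorization bound: for any A ∈ ℝ^{M×N} with rank(A) ≤ P, there exist C ∈ ℝ^{M×P} and B ∈ ℝ^{N×P} with A = C Bᵀ and (1/2)(‖B‖_F² + ‖C‖_F²) = ‖A‖_*; such a factorization is obtained from the singular value decomposition A = U Σ Vᵀ by taking C = U Σ^{1/2} and B = V Σ^{1/2}. Consequently, ‖A‖_* = min{(1/2)(‖B‖_F² + ‖C‖_F²) : A = C Bᵀ, C ∈ ℝ^{M×P}, B ∈ ℝ^{N×P}}. -/

import Mathlib

open Matrix

/-- Squared Frobenius norm of a real matrix: `∑_{i,j} M_{ij}²`. -/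
def frobSq {m n : ℕ} (X : Matrix (Fin m) (Fin n) ℝ) : ℝ :=
  ∑ i, ∑ j, (X i j) ^ 2

/-- Nuclear norm of a real matrix: the trace of the positive semidefinite
square root of `AᴴA = AᵀA` (i.e., the sum of singular values of `A`). -/
noncomputable def nuclearNorm {m n : ℕ} (A : Matrix (Fin m) (Fin n) ℝ) : ℝ :=
  let hA := Matrix.posSemidef_conjTranspose_mul_self A
  ((hA.1.eigenvectorUnitary : Matrix (Fin n) (Fin n) ℝ) *
    diagonal ((RCLike.ofReal : ℝ → ℝ) ∘ Real.sqrt ∘ hA.1.eigenvalues) *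
    (star hA.1.eigenvectorUnitary : Matrix (Fin n) (Fin n) ℝ)).trace

/-! Diagonalise `AᵀA = V diag(σ²) Vᵀ` with `V` orthogonal, so that `‖A‖_* = ∑ σⱼ`.
If `A = C Bᵀ`, then `U = A V diag(σ⁻¹)` (with `0⁻¹ = 0`) satisfies `U Uᵀ U = U` and `Uᵀ A V = diag σ`,
hence `∑ σⱼ = tr((UᵀC)(VᵀB)ᵀ) ≤ ½(‖UᵀC‖² + ‖VᵀB‖²) ≤ ½(‖C‖² + ‖B‖²)`, multiplication by `Uᵀ`
and `Vᵀ` being Frobenius contractions. Conversely `C = A V diag(σ^{-1/2})` and `B = V diag(σ^{1/2})`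
attain the bound; their columns vanish outside the `rank A` indices with `σⱼ ≠ 0`, so they can be
packed into `P` columns. -/

lemma frobSq_eq_trace_transpose_mul_self {m n : ℕ} (X : Matrix (Fin m) (Fin n) ℝ) :
    frobSq X = trace (Xᵀ * X) := by
  simp only [frobSq, trace, diag, mul_apply, transpose_apply, sq]
  exact Finset.sum_comm

lemma frobSq_nonneg {m n : ℕ} (X : Matrix (Fin m) (Fin n) ℝ) : 0 ≤ frobSq X := by
  unfold frobSq
  positivity

lemma trace_mul_transpose_le_half_frobSq {m n : ℕ} (X Y : Matrix (Fin m) (Fin n) ℝ) :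
    trace (X * Yᵀ) ≤ (1 / 2) * (frobSq X + frobSq Y) := by
  simp only [frobSq, trace, diag, mul_apply, transpose_apply, ← Finset.sum_add_distrib,
    Finset.mul_sum]
  refine Finset.sum_le_sum fun i _ => Finset.sum_le_sum fun j _ => ?_
  nlinarith [sq_nonneg (X i j - Y i j)]

lemma frobSq_transpose_mul_le {m n p : ℕ} {U : Matrix (Fin m) (Fin n) ℝ} (hU : U * Uᵀ * U = U)
    (X : Matrix (Fin m) (Fin p) ℝ) : frobSq (Uᵀ * X) ≤ frobSq X := by
  set R := 1 - U * Uᵀ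
  have hR : Rᵀ * R = R := by
    have hUU : U * Uᵀ * (U * Uᵀ) = U * Uᵀ := by rw [← Matrix.mul_assoc, hU]
    simp [R, Matrix.sub_mul, Matrix.mul_sub, hUU]
  have hdiff : frobSq X - frobSq (Uᵀ * X) = frobSq (R * X) := by
    simp only [frobSq_eq_trace_transpose_mul_self, transpose_mul, transpose_transpose,
      Matrix.mul_assoc, ← Matrix.mul_assoc Rᵀ, hR, ← trace_sub]
    simp only [R, Matrix.sub_mul, Matrix.mul_sub, Matrix.one_mul, Matrix.mul_assoc, trace_sub]
  linarith [frobSq_nonneg (R * X)]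

lemma frobSq_mul_diagonal {m n : ℕ} {W : Matrix (Fin m) (Fin n) ℝ} {μ : Fin n → ℝ}
    (hW : Wᵀ * W = diagonal μ) (d : Fin n → ℝ) :
    frobSq (W * diagonal d) = ∑ j, d j ^ 2 * μ j := by
  rw [frobSq_eq_trace_transpose_mul_self, transpose_mul, diagonal_transpose, Matrix.mul_assoc,
    ← Matrix.mul_assoc Wᵀ, hW, diagonal_mul_diagonal, diagonal_mul_diagonal, trace_diagonal]
  exact Finset.sum_congr rfl fun j _ => by ring

lemma apply_eq_zero_of_transpose_mul_self_apply_eq_zero {m n : ℕ} {W : Matrix (Fin m) (Fin n) ℝ}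
    {j : Fin n} (h : (Wᵀ * W) j j = 0) (i : Fin m) : W i j = 0 := by
  simp only [mul_apply, transpose_apply] at h
  exact mul_self_eq_zero.mp <|
    (Finset.sum_eq_zero_iff_of_nonneg fun i _ => mul_self_nonneg _).mp h i (Finset.mem_univ i)

lemma mul_diagonal_eq_self {m n : ℕ} {W : Matrix (Fin m) (Fin n) ℝ} {μ d : Fin n → ℝ}
    (hW : Wᵀ * W = diagonal μ) (hd : ∀ j, μ j ≠ 0 → d j = 1) : W * diagonal d = W := by
  ext i j
  rw [mul_diagonal]
  by_cases hμ : μ j = 0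
  · rw [apply_eq_zero_of_transpose_mul_self_apply_eq_zero (W := W) (j := j)
      (by rw [hW, diagonal_apply_eq, hμ]), zero_mul]
  · rw [hd j hμ, mul_one]

def coordProj {n : ℕ} (s : Finset (Fin n)) : Matrix (Fin n) (Fin n) ℝ :=
  diagonal fun j => if j ∈ s then 1 else 0

lemma mul_diagonal_mul_coordProj {m n : ℕ} (W : Matrix (Fin m) (Fin n) ℝ) {s : Finset (Fin n)}
    {d : Fin n → ℝ} (hd : ∀ j ∉ s, d j = 0) : W * diagonal d * coordProj s = W * diagonal d := by
  rw [coordProj, Matrix.mul_assoc, diagonal_mul_diagonal]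
  congr 2
  funext j
  by_cases hj : j ∈ s <;> simp [hj, hd]

lemma exists_mul_transpose_eq_coordProj {n P : ℕ} (s : Finset (Fin n)) (hs : s.card ≤ P) :
    ∃ E : Matrix (Fin n) (Fin P) ℝ, E * Eᵀ = coordProj s := by
  obtain ⟨e⟩ : Nonempty (s ↪ Fin P) := Function.Embedding.nonempty_of_card_le (by simpa using hs)
  refine ⟨of fun j p => if h : j ∈ s then (if e ⟨j, h⟩ = p then 1 else 0) else 0, ?_⟩
  ext j j'
  by_cases hj : j ∈ s <;> by_cases hj' : j' ∈ s <;>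
    simp [coordProj, mul_apply, diagonal_apply, hj, hj', e.injective.eq_iff]
  exact ne_of_mem_of_not_mem hj hj'

lemma exists_mul_transpose_eq_of_mul_coordProj {m k n P : ℕ} {s : Finset (Fin n)}
    (hs : s.card ≤ P) {X : Matrix (Fin m) (Fin n) ℝ} {Y : Matrix (Fin k) (Fin n) ℝ}
    (hX : X * coordProj s = X) (hY : Y * coordProj s = Y) :
    ∃ (X' : Matrix (Fin m) (Fin P) ℝ) (Y' : Matrix (Fin k) (Fin P) ℝ),
      X' * Y'ᵀ = X * Yᵀ ∧ frobSq X' = frobSq X ∧ frobSq Y' = frobSq Y := by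
  obtain ⟨E, hE⟩ := exists_mul_transpose_eq_coordProj s hs
  have frobSq_mul_E : ∀ {r : ℕ} (Z : Matrix (Fin r) (Fin n) ℝ), Z * coordProj s = Z →
      frobSq (Z * E) = frobSq Z := fun Z hZ => by
    rw [frobSq_eq_trace_transpose_mul_self, frobSq_eq_trace_transpose_mul_self, transpose_mul,
      Matrix.mul_assoc, trace_mul_comm, Matrix.mul_assoc, Matrix.mul_assoc Z, hE, hZ]
  refine ⟨X * E, Y * E, ?_, frobSq_mul_E X hX, frobSq_mul_E Y hY⟩
  rw [transpose_mul, Matrix.mul_assoc, ← Matrix.mul_assoc E, hE, ← Matrix.mul_assoc, hX]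

section SingularValues

variable {M N : ℕ} {A : Matrix (Fin M) (Fin N) ℝ} {V : Matrix (Fin N) (Fin N) ℝ} {σ : Fin N → ℝ}

lemma sum_le_half_frobSq_of_eq_mul_transpose {P : ℕ} (hV : Vᵀ * V = 1)
    (hAV : (A * V)ᵀ * (A * V) = diagonal (σ ^ 2))
    {C : Matrix (Fin M) (Fin P) ℝ} {B : Matrix (Fin N) (Fin P) ℝ} (hA : A = C * Bᵀ) :
    ∑ j, σ j ≤ (1 / 2) * (frobSq B + frobSq C) := by
  set U := A * V * diagonal σ⁻¹
  have hUU : Uᵀ * U = diagonal (σ⁻¹ * (σ ^ 2 * σ⁻¹)) := by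
    rw [transpose_mul, diagonal_transpose, Matrix.mul_assoc, ← Matrix.mul_assoc (A * V)ᵀ, hAV,
      diagonal_mul_diagonal, diagonal_mul_diagonal]
    rfl
  have hU : U * Uᵀ * U = U := by
    rw [Matrix.mul_assoc, hUU, Matrix.mul_assoc, diagonal_mul_diagonal]
    congr 2
    funext j
    rcases eq_or_ne (σ j) 0 with hj | hj
    · simp [hj]
    · simp [field]
  have hV' : V * Vᵀ * V = V := by rw [Matrix.mul_assoc, hV, Matrix.mul_one]
  have hUAV : Uᵀ * (A * V) = diagonal σ := by
    rw [transpose_mul, diagonal_transpose, Matrix.mul_assoc, hAV, diagonal_mul_diagonal]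
    congr 1
    funext j
    rcases eq_or_ne (σ j) 0 with hj | hj
    · simp [hj]
    · simp [field]
  calc ∑ j, σ j = trace (Uᵀ * (A * V)) := by rw [hUAV, trace_diagonal]
    _ = trace ((Uᵀ * C) * (Vᵀ * B)ᵀ) := by
      simp only [hA, transpose_mul, transpose_transpose, Matrix.mul_assoc]
    _ ≤ (1 / 2) * (frobSq (Uᵀ * C) + frobSq (Vᵀ * B)) := trace_mul_transpose_le_half_frobSq _ _
    _ ≤ (1 / 2) * (frobSq C + frobSq B) := by
      gcongr
      · exact frobSq_transpose_mul_le hU C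
      · exact frobSq_transpose_mul_le hV' B
    _ = (1 / 2) * (frobSq B + frobSq C) := by ring

lemma exists_mul_transpose_eq_half_frobSq_eq_sum {P : ℕ} (hV : Vᵀ * V = 1)
    (hAV : (A * V)ᵀ * (A * V) = diagonal (σ ^ 2)) (hσ : 0 ≤ σ)
    (hP : (Finset.univ.filter fun j => σ j ≠ 0).card ≤ P) :
    ∃ (C : Matrix (Fin M) (Fin P) ℝ) (B : Matrix (Fin N) (Fin P) ℝ),
      A = C * Bᵀ ∧ (1 / 2) * (frobSq B + frobSq C) = ∑ j, σ j := by
  set τ : Fin N → ℝ := fun j => √(σ j)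
  have hτ : ∀ j, τ j = 0 ↔ σ j = 0 := fun j => Real.sqrt_eq_zero (hσ j)
  obtain ⟨C, B, hCB, hC, hB⟩ := exists_mul_transpose_eq_of_mul_coordProj hP
    (mul_diagonal_mul_coordProj (A * V) (d := τ⁻¹) fun j hj => by simp_all)
    (mul_diagonal_mul_coordProj V (d := τ) fun j hj => by simp_all)
  refine ⟨C, B, ?_, ?_⟩
  · have hAVτ : A * V * diagonal (τ⁻¹ * τ) = A * V :=
      mul_diagonal_eq_self hAV fun j hj => inv_mul_cancel₀ (by simp_all)
    rw [hCB, transpose_mul, diagonal_transpose, Matrix.mul_assoc, ← Matrix.mul_assoc (diagonal _),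
      diagonal_mul_diagonal, ← Matrix.mul_assoc, ← Pi.mul_def, hAVτ, Matrix.mul_assoc,
      mul_eq_one_comm.mp hV, Matrix.mul_one]
  · rw [hC, hB, frobSq_mul_diagonal hAV, frobSq_mul_diagonal (hV.trans diagonal_one.symm)]
    have hτσ : ∀ j, τ j ^ 2 = σ j := fun j => Real.sq_sqrt (hσ j)
    simp only [Pi.inv_apply, Pi.pow_apply, inv_pow, hτσ, mul_one]
    rw [← Finset.sum_add_distrib, Finset.mul_sum]
    refine Finset.sum_congr rfl fun j _ => ?_
    rcases eq_or_ne (σ j) 0 with hj | hj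
    · simp [hj]
    · field_simp
      ring

end SingularValues

lemma transpose_mul_mul_eigenvectorUnitary {n : ℕ} {H : Matrix (Fin n) (Fin n) ℝ}
    (hH : H.IsHermitian) :
    (hH.eigenvectorUnitary : Matrix (Fin n) (Fin n) ℝ)ᵀ * H * hH.eigenvectorUnitary =
      diagonal hH.eigenvalues := by
  simpa [Unitary.conjStarAlgAut_star_apply, star_eq_conjTranspose,
    conjTranspose_eq_transpose_of_trivial] using hH.conjStarAlgAut_star_eigenvectorUnitary

lemma nuclearNorm_eq_sum_sqrt_eigenvalues {m n : ℕ} (A : Matrix (Fin m) (Fin n) ℝ) :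
    nuclearNorm A = ∑ j, √((posSemidef_conjTranspose_mul_self A).1.eigenvalues j) := by
  rw [nuclearNorm, trace_mul_cycle, Unitary.coe_star_mul_self, Matrix.one_mul, trace_diagonal]
  rfl

lemma exists_rightSingularVectors {M N : ℕ} (A : Matrix (Fin M) (Fin N) ℝ) :
    ∃ (V : Matrix (Fin N) (Fin N) ℝ) (σ : Fin N → ℝ), Vᵀ * V = 1 ∧
      (A * V)ᵀ * (A * V) = diagonal (σ ^ 2) ∧ 0 ≤ σ ∧
      (Finset.univ.filter fun j => σ j ≠ 0).card = A.rank ∧ nuclearNorm A = ∑ j, σ j := by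
  set hH := (posSemidef_conjTranspose_mul_self A).1
  have hμ : ∀ j, 0 ≤ hH.eigenvalues j :=
    (posSemidef_conjTranspose_mul_self A).eigenvalues_nonneg
  refine ⟨hH.eigenvectorUnitary, fun j => √(hH.eigenvalues j), ?_, ?_,
    fun j => Real.sqrt_nonneg _, ?_, nuclearNorm_eq_sum_sqrt_eigenvalues A⟩
  · simpa [star_eq_conjTranspose, conjTranspose_eq_transpose_of_trivial] using
      Unitary.coe_star_mul_self hH.eigenvectorUnitary
  · have hsq : (fun j => √(hH.eigenvalues j)) ^ 2 = hH.eigenvalues :=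
      funext fun j => Real.sq_sqrt (hμ j)
    rw [hsq, ← transpose_mul_mul_eigenvectorUnitary hH, transpose_mul]
    simp only [Matrix.mul_assoc, conjTranspose_eq_transpose_of_trivial]
  · simp_rw [ne_eq, Real.sqrt_eq_zero (hμ _), ← ne_eq]
    rw [← Fintype.card_subtype, ← hH.rank_eq_card_non_zero_eigs, rank_conjTranspose_mul_self]

/-- Attainment of the nuclear-norm factorization bound: if `rank A ≤ P`, some
factorization `A = C Bᵀ` attains `(1/2)(‖B‖_F² + ‖C‖_F²) = ‖A‖_*`;
consequently `‖A‖_*` is the minimum of `(1/2)(‖B‖_F² + ‖C‖_F²)` over all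
factorizations `A = C Bᵀ` with `C ∈ ℝ^{M×P}`, `B ∈ ℝ^{N×P}`. -/
theorem nuclearNorm_factorization_attained (M N P : ℕ)
    (A : Matrix (Fin M) (Fin N) ℝ) (hrank : A.rank ≤ P) :
    (∃ (C : Matrix (Fin M) (Fin P) ℝ) (B : Matrix (Fin N) (Fin P) ℝ),
        A = C * Bᵀ ∧ (1 / 2) * (frobSq B + frobSq C) = nuclearNorm A) ∧
      ∀ (C : Matrix (Fin M) (Fin P) ℝ) (B : Matrix (Fin N) (Fin P) ℝ),
        A = C * Bᵀ → nuclearNorm A ≤ (1 / 2) * (frobSq B + frobSq C) := by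
  obtain ⟨V, σ, hV, hAV, hσ, hrankσ, hnuc⟩ := exists_rightSingularVectors A
  rw [hnuc]
  exact ⟨exists_mul_transpose_eq_half_frobSq_eq_sum hV hAV hσ (hrankσ.trans_le hrank),
    fun C B hA => sum_le_half_frobSq_of_eq_mul_transpose hV hAV hA⟩
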